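/- For every n ∈ ℕ, Crit_n is isomorphic to Step^O_n({End(w)}) ∪ {S₀(w,w)}, where two atom sets are isomorphic if there is a homomorphism between them that is injective and whose inverse is also a homomorphism. -/

import Mathlib

set_option maxHeartbeats 1000000
set_option synthInstance.maxHeartbeats 1000000
set_option synthInstance.maxSize 512

attribute [local instance] Classical.propDecidable

noncomputable section

/-! ### Terms and atoms -/

/-- Variables: ordinary variables `Sum.inl n`, or fresh variables `Sum.inr (c, k)`
introduced by the trigger with code `c` for the head variable with code `k`. -/
abbrev Var : Type := ℕ ⊕ (ℕ × ℕ)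

/-- Terms: constants `Sum.inl c` or variables `Sum.inr v`. -/
abbrev FTerm : Type := ℕ ⊕ Var

def ct (n : ℕ) : FTerm := Sum.inl n
def vt (n : ℕ) : FTerm := Sum.inr (Sum.inl n)

/-- An atom: a predicate name together with its list of arguments. -/
abbrev Atom : Type := ℕ × List FTerm

/-- Active domain: all terms occurring in an atom set. -/
def adom (J : Set Atom) : Set FTerm := {t | ∃ a ∈ J, t ∈ a.2}

def atomVarsF (a : Atom) : Finset Var := (a.2.filterMap Sum.getRight?).toFinset

def varsF (A : Finset Atom) : Finset Var := A.biUnion atomVarsF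

def setVars (J : Set Atom) : Set Var := {v | ∃ a ∈ J, Sum.inr v ∈ a.2}

/-! ### Substitutions and homomorphisms -/

abbrev Subst := Var → FTerm

def applyT (σ : Subst) : FTerm → FTerm
  | Sum.inl c => Sum.inl c
  | Sum.inr v => σ v

def applyA (σ : Subst) (a : Atom) : Atom := (a.1, a.2.map (applyT σ))

def IsHomOn (σ : Subst) (A B : Set Atom) : Prop := ∀ a ∈ A, applyA σ a ∈ B

def HomBetween (A B : Set Atom) : Prop := ∃ σ : Subst, IsHomOn σ A B

def IsRetraction (σ : Subst) (A B : Set Atom) : Prop :=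
  IsHomOn σ A B ∧ ∀ v ∈ setVars A ∩ setVars B, σ v = Sum.inr v

/-- Isomorphism of atom sets: a pair of mutually inverse homomorphisms. -/
def Isomorphic (A B : Set Atom) : Prop :=
  ∃ σ τ : Subst, IsHomOn σ A B ∧ IsHomOn τ B A ∧
    (∀ a ∈ A, applyA τ (applyA σ a) = a) ∧ (∀ b ∈ B, applyA σ (applyA τ b) = b)

/-! ### Rules -/

/-- A rule is a pair (body, head). Its existential variables are the head variables
not occurring in the body; its frontier the variables shared by body and head.
A rule is Datalog when every head variable occurs in the body. -/
abbrev Rule : Type := Finset Atom × Finset Atom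

def frontierOf (R : Rule) : Finset Var := varsF R.1 ∩ varsF R.2

def DatRules (Rset : Finset Rule) : Finset Rule := Rset.filter fun R => varsF R.2 ⊆ varsF R.1
def NDatRules (Rset : Finset Rule) : Finset Rule := Rset.filter fun R => ¬ varsF R.2 ⊆ varsF R.1

/-- Satisfaction of a rule in an atom set. -/
def SatisfiesRule (J : Set Atom) (R : Rule) : Prop :=
  ∀ σ : Subst, IsHomOn σ (R.1 : Set Atom) J →
    ∃ σ' : Subst, (∀ v ∈ varsF R.1, σ' v = σ v) ∧ IsHomOn σ' (R.2 : Set Atom) J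

def IsModel (Rset : Finset Rule) (I J : Set Atom) : Prop :=
  (∀ R ∈ Rset, SatisfiesRule J R) ∧ HomBetween I J

/-- BCQ entailment: every model of the KB satisfies the query. -/
def Entails (Rset : Finset Rule) (I q : Set Atom) : Prop :=
  ∀ J : Set Atom, IsModel Rset I J → HomBetween q J

def IsUniversalModel (Rset : Finset Rule) (I U : Set Atom) : Prop :=
  IsModel Rset I U ∧ ∀ J : Set Atom, IsModel Rset I J → HomBetween U J

/-! ### Triggers -/

structure Trigger where
  rule : Rule
  sub : Subst

/-- Injective code of a trigger (a trigger is determined by its rule and the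
restriction of its substitution to the body variables). -/
def Trigger.code (t : Trigger) : ℕ :=
  Encodable.encode (t.rule, (varsF t.rule.1).image fun v => (v, t.sub v))

/-- The canonical extension of the trigger substitution, mapping each existential
variable `z` to the fresh variable unique for `z` and the trigger. -/
def Trigger.extSub (t : Trigger) : Subst := fun v =>
  if v ∈ varsF t.rule.1 then t.sub v
  else Sum.inr (Sum.inr (t.code, Encodable.encode v))

def Trigger.out (t : Trigger) : Finset Atom := t.rule.2.image (applyA t.extSub)

def Trigger.isOn (t : Trigger) (J : Set Atom) : Prop := IsHomOn t.sub (t.rule.1 : Set Atom) J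

/-! ### Chase variants, derivations, chase termination classes -/

inductive ChaseVariant : Type
  | O | SO | R | E
deriving DecidableEq

def Applicable : ChaseVariant → Trigger → Set Atom → Prop
  | .O, t, J => ¬ ((t.out : Set Atom) ⊆ J)
  | .SO, t, J => ∀ t' : Trigger, t'.rule = t.rule → t'.isOn J →
      (∀ v ∈ frontierOf t.rule, t'.sub v = t.sub v) → ¬ ((t'.out : Set Atom) ⊆ J)
  | .R, t, J => ¬ ∃ σ : Subst, IsRetraction σ (J ∪ (t.out : Set Atom)) J
  | .E, t, J => ¬ ∃ σ : Subst, IsHomOn σ (J ∪ (t.out : Set Atom)) J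

def instSeq (I : Set Atom) (steps : ℕ → Option Trigger) : ℕ → Set Atom
  | 0 => I
  | n + 1 => instSeq I steps n ∪
      (match steps n with
        | none => (∅ : Set Atom)
        | some t => (t.out : Set Atom))

/-- A (possibly infinite) derivation from the knowledge base `⟨Rset, I⟩`. -/
structure Deriv (Rset : Finset Rule) (I : Set Atom) where
  steps : ℕ → Option Trigger
  prefix_closed : ∀ n, steps n = none → steps (n + 1) = none
  valid : ∀ n t, steps n = some t →
    t.rule ∈ Rset ∧ t.isOn (instSeq I steps n) ∧ ¬ ((t.out : Set Atom) ⊆ instSeq I steps n)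

def Deriv.inst {Rset : Finset Rule} {I : Set Atom} (D : Deriv Rset I) (n : ℕ) :
    Set Atom := instSeq I D.steps n

def Deriv.res {Rset : Finset Rule} {I : Set Atom} (D : Deriv Rset I) : Set Atom :=
  ⋃ n, D.inst n

def Deriv.Finite {Rset : Finset Rule} {I : Set Atom} (D : Deriv Rset I) : Prop :=
  ∃ n, D.steps n = none

def Deriv.IsX {Rset : Finset Rule} {I : Set Atom} (X : ChaseVariant)
    (D : Deriv Rset I) : Prop :=
  ∀ n t, D.steps n = some t → Applicable X t (D.inst n)

def Deriv.Fair {Rset : Finset Rule} {I : Set Atom} (X : ChaseVariant)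
    (D : Deriv Rset I) : Prop :=
  ∀ i, ∀ t : Trigger, t.rule ∈ Rset → t.isOn (D.inst i) → Applicable X t (D.inst i) →
    ∃ j, i < j ∧ ¬ Applicable X t (D.inst j)

/-- All-instance, all-derivation chase termination. -/
def CTall (X : ChaseVariant) (Rset : Finset Rule) : Prop :=
  ∀ I : Finset Atom, ∀ D : Deriv Rset (I : Set Atom), D.IsX X → D.Fair X → D.Finite

/-- All-instance, some-derivation chase termination. -/
def CTex (X : ChaseVariant) (Rset : Finset Rule) : Prop :=
  ∀ I : Finset Atom, ∃ D : Deriv Rset (I : Set Atom), D.IsX X ∧ D.Fair X ∧ D.Finite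

inductive CTQuant : Type
  | all | ex

def CT (X : ChaseVariant) : CTQuant → Finset Rule → Prop
  | .all => CTall X
  | .ex => CTex X

/-- The result of some fair `X`-derivation from `⟨Rset, J⟩`. -/
def ChX (X : ChaseVariant) (Rset : Finset Rule) (J : Set Atom) : Set Atom :=
  if h : ∃ D : Deriv Rset J, D.IsX X ∧ D.Fair X then h.choose.res else J

/-! ### Gaifman graph, treewidth, bts -/

def gaifmanAdj (J : Set Atom) (u v : FTerm) : Prop :=
  u ≠ v ∧ ∃ a ∈ J, u ∈ a.2 ∧ v ∈ a.2

/-- The (Gaifman graph of the) atom set `J` has treewidth at most `k`: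
there is a tree decomposition all of whose bags have size at most `k + 1`. -/
def TreewidthAtMost (J : Set Atom) (k : ℕ) : Prop :=
  ∃ (ι : Type) (T : SimpleGraph ι) (bag : ι → Finset FTerm),
    T.Connected ∧ T.IsAcyclic ∧
    (∀ v ∈ adom J, ∃ i, v ∈ bag i) ∧
    (∀ u v : FTerm, gaifmanAdj J u v → ∃ i, u ∈ bag i ∧ v ∈ bag i) ∧
    (∀ v : FTerm, (SimpleGraph.induce {i | v ∈ bag i} T).Preconnected) ∧
    (∀ i, (bag i).card ≤ k + 1)

/-- Bounded-treewidth sets: for every instance, some universal model of bounded treewidth. -/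
def IsBts (Rset : Finset Rule) : Prop :=
  ∀ I : Finset Atom, ∃ (k : ℕ) (U : Set Atom),
    IsUniversalModel Rset (I : Set Atom) U ∧ TreewidthAtMost U k

/-! ### Three-counter machines -/

/-- A three-counter machine: states `0, …, m − 1` (state `0` is initial, standing for `q₁`),
and a partial transition function given by a finite table. -/
structure TCM where
  m : ℕ
  hm : 0 < m
  δ : List ((ℕ × Bool × Bool) × (ℕ × Int × Int))
  keys_nodup : (δ.map Prod.fst).Nodup
  wf : ∀ e ∈ δ, e.1.1 < m ∧ e.2.1 < m ∧ e.2.2.1.natAbs ≤ 1 ∧ e.2.2.2.natAbs ≤ 1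

/-- A configuration: state, two counters, and the time counter. -/
abbrev Config : Type := ℕ × ℕ × ℕ × ℕ

def TCM.step (M : TCM) (q : ℕ) (b1 b2 : Bool) : Option (ℕ × Int × Int) :=
  (M.δ.find? fun e => decide (e.1 = (q, b1, b2))).map Prod.snd

def TCM.next (M : TCM) (C : Config) : Option Config :=
  match M.step C.1 (decide (C.2.1 ≠ 0)) (decide (C.2.2.1 ≠ 0)) with
  | none => none
  | some (q', d1, d2) =>
      some (q', ((C.2.1 : ℤ) + d1).toNat, ((C.2.2.1 : ℤ) + d2).toNat, C.2.2.2 + 1)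

def TCM.run (M : TCM) : ℕ → Option Config
  | 0 => some (0, 0, 0, 0)
  | n + 1 => (M.run n).bind M.next

/-- The machine halts: some reachable configuration has no successor. -/
def TCM.Halts (M : TCM) : Prop := ∃ n C, M.run n = some C ∧ M.next C = none

/-! ### Prime encoding of configurations -/

/-- The least prime strictly greater than `n` (computably). -/
def nextPrime (n : ℕ) : ℕ := Nat.find (Nat.exists_infinite_primes (n + 1))

/-- `prm i` is the `(i+1)`-st prime `p_{i+1}`, i.e. `prm 0 = 2`. -/
def prm : ℕ → ℕ
  | 0 => 2
  | k + 1 => nextPrime (prm k)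

/-- Encoding of a configuration as a natural number. -/
def TCM.enc (M : TCM) (C : Config) : ℕ :=
  prm C.1 * prm M.m ^ C.2.1 * prm (M.m + 1) ^ C.2.2.1 * prm (M.m + 2) ^ C.2.2.2

/-- `p = p₁ ⋯ p_{m+3}`. -/
def TCM.p (M : TCM) : ℕ := ∏ i ∈ Finset.range (M.m + 3), prm i

/-- Decode the state from a residue modulo `M.p`. -/
def TCM.stateOf (M : TCM) (i : ℕ) : Option ℕ :=
  (List.range M.m).find? fun s => decide (prm s ∣ i)

/-- The canonical pair `(q_i, r_i)` realizing the prime encoding of the transitions. -/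
def TCM.qr (M : TCM) (i : ℕ) : ℕ × ℕ :=
  match M.stateOf i with
  | none => (1, 1)
  | some s =>
      let b1 : Bool := decide (prm M.m ∣ i)
      let b2 : Bool := decide (prm (M.m + 1) ∣ i)
      match M.step s b1 b2 with
      | none => (1, 1)
      | some (s', d1, d2) =>
          let e1 : ℤ := if b1 then d1 else max d1 0
          let e2 : ℤ := if b2 then d2 else max d2 0
          let num : ℕ := prm s' * prm (M.m + 2) *
            (if e1 = 1 then prm M.m else 1) * (if e2 = 1 then prm (M.m + 1) else 1)
          let den : ℕ := prm s *
            (if e1 = -1 then prm M.m else 1) * (if e2 = -1 then prm (M.m + 1) else 1)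
          (num / Nat.gcd num den, den / Nat.gcd num den)

def TCM.qi (M : TCM) (i : ℕ) : ℕ := (M.qr i).1
def TCM.ri (M : TCM) (i : ℕ) : ℕ := (M.qr i).2

/-- `g(n) = q_{n mod p} · n / r_{n mod p}`. -/
def TCM.g (M : TCM) (n : ℕ) : ℕ := M.qi (n % M.p) * n / M.ri (n % M.p)

/-- `gᵏ(2)`. -/
def TCM.gIter (M : TCM) (k : ℕ) : ℕ := (M.g)^[k] 2

/-- `G = {gᵏ(2) : k ∈ ℕ}`. -/
def TCM.Gset (M : TCM) : Set ℕ := Set.range M.gIter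

/-! ### The rule set `R_M` -/

def pEnd : ℕ := 0
def pFlood : ℕ := 1
def pS0 : ℕ := 2
def pS : ℕ := 3
def pG : ℕ := 4
def pR (i : ℕ) : ℕ := 5 + 2 * i
def pT (i : ℕ) : ℕ := 6 + 2 * i

/-- `j`-th vertex of an `S`-path of length `n` from variable `a` to variable `b`
with fresh intermediate variables `base + 1, …, base + n − 1`. -/
def pathVar (a b base n j : ℕ) : FTerm :=
  if j = 0 then vt a else if j = n then vt b else vt (base + j)

/-- The atoms of `Sⁿ(x_a, x_b)`: an `S`-path of length `n`. -/
def spath (a b base n : ℕ) : Finset Atom :=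
  (Finset.range n).image fun j =>
    (pS, [pathVar a b base n j, pathVar a b base n (j + 1)])

/-- Rule (1): `S₀(x,y) → S(x,y)`. -/
def ruleS : Rule := ({(pS0, [vt 0, vt 1])}, {(pS, [vt 0, vt 1])})

/-- Rule (2): `R_i(x,y) ∧ S(y,z) → R_{i+1}(x,z)` (indices modulo `p`). -/
def ruleR (M : TCM) (i : ℕ) : Rule :=
  ({(pR i, [vt 0, vt 1]), (pS, [vt 1, vt 2])}, {(pR ((i + 1) % M.p), [vt 0, vt 2])})

/-- Rule (3): `T_i(x,y,z) ∧ S^{r_i}(y,y′) ∧ S^{q_i}(z,z′) → T_i(x,y′,z′)`. -/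
def ruleT (M : TCM) (i : ℕ) : Rule :=
  (({(pT i, [vt 0, vt 1, vt 2])} : Finset Atom) ∪ spath 1 3 10 (M.ri i) ∪
      spath 2 4 (11 + M.ri i) (M.qi i),
    {(pT i, [vt 0, vt 3, vt 4])})

/-- Rule (4): `S(x,y) → Flood(y)`. -/
def ruleFloodProp : Rule := ({(pS, [vt 0, vt 1])}, {(pFlood, [vt 1])})

/-- Rule (5): `End(x) → S(x,x)`. -/
def ruleSEnd : Rule := ({(pEnd, [vt 0])}, {(pS, [vt 0, vt 0])})

/-- Rule (6): `S²(x,y) → G(x,y)`. -/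
def ruleGInit : Rule := (spath 0 1 10 2, {(pG, [vt 0, vt 1])})

/-- Rule (7): `G(x,y) ∧ R_i(x,y) ∧ T_i(x,y,z) → G(x,z)`. -/
def ruleGStep (i : ℕ) : Rule :=
  ({(pG, [vt 0, vt 1]), (pR i, [vt 0, vt 1]), (pT i, [vt 0, vt 1, vt 2])},
    {(pG, [vt 0, vt 2])})

/-- Rule (8): `Flood(x) ∧ Flood(y) ∧ Flood(z) → G(x,y) ∧ ⋀_{j<p} (R_j(x,y) ∧ T_j(x,y,z))`. -/
def ruleFloodGen (M : TCM) : Rule :=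
  ({(pFlood, [vt 0]), (pFlood, [vt 1]), (pFlood, [vt 2])},
    ({(pG, [vt 0, vt 1])} : Finset Atom) ∪
      (Finset.range M.p).biUnion fun j =>
        {(pR j, [vt 0, vt 1]), (pT j, [vt 0, vt 1, vt 2])})

/-- Rule (9): `G(y,z) ∧ End(z) → ∃x (S₀(x,y) ∧ R₀(x,x) ∧ ⋀_{j<p} T_j(x,x,x))`. -/
def ruleEx (M : TCM) : Rule :=
  ({(pG, [vt 1, vt 2]), (pEnd, [vt 2])},
    ({(pS0, [vt 0, vt 1]), (pR 0, [vt 0, vt 0])} : Finset Atom) ∪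
      (Finset.range M.p).biUnion fun j => {(pT j, [vt 0, vt 0, vt 0])})

/-- The rule set `R_M`. -/
def RM (M : TCM) : Finset Rule :=
  ({ruleS, ruleFloodProp, ruleSEnd, ruleGInit, ruleFloodGen M, ruleEx M} : Finset Rule) ∪
    (Finset.range M.p).biUnion fun i => {ruleR M i, ruleT M i, ruleGStep i}

/-- The alternating Datalog/non-Datalog chase steps `Step^X_n`. -/
def StepX (X : ChaseVariant) (M : TCM) : ℕ → Set Atom → Set Atom
  | 0, I => ChX X (DatRules (RM M)) I
  | n + 1, I => ChX X (DatRules (RM M)) (ChX X (NDatRules (RM M)) (StepX X M n I))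

/-- The constant `w`, the "well of positivity". -/
def wC : FTerm := ct 0

/-- The instance `{End(w)}`. -/
def IE : Set Atom := {(pEnd, [wC])}

/-- Membership in the signature of `R_M` (predicate together with its arity). -/
def InSig (M : TCM) (a : Atom) : Prop :=
  ((a.1 = pEnd ∨ a.1 = pFlood) ∧ a.2.length = 1) ∨
  ((a.1 = pS0 ∨ a.1 = pS ∨ a.1 = pG ∨ ∃ i < M.p, a.1 = pR i) ∧ a.2.length = 2) ∨
  ((∃ i < M.p, a.1 = pT i) ∧ a.2.length = 3)

/-- The critical instance: all atoms `P(w, …, w)` over the signature of `R_M`. -/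
def Crit (M : TCM) : Set Atom := {a | InSig M a ∧ ∀ t ∈ a.2, t = wC}

/-- An `S`-path of length `k` from `s` to `t` in `J`. -/
def SPath (J : Set Atom) : ℕ → FTerm → FTerm → Prop
  | 0, s, t => s = t
  | k + 1, s, t => ∃ u, (pS, [s, u]) ∈ J ∧ SPath J k u t

/-- The restriction `J|_S`: atoms of `J` all of whose terms belong to `S`. -/
def restrictTo (J : Set Atom) (S : Set FTerm) : Set Atom := {a ∈ J | ∀ t ∈ a.2, t ∈ S}

/-- An explicit injective encoding of three-counter machines by natural numbers. -/
def encodeTCM (M : TCM) : ℕ := Encodable.encode (M.m, M.δ)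


/-!
The result of a fair oblivious derivation does not depend on the derivation: it is the least
superset of the input closed under all triggers of the rule set. From `End(w)` the Datalog rules
(5), (4) and (8) derive every `w`-atom of the signature except `S₀(w, w)`, so the Datalog closures
of `Crit` and of `{End(w)}` differ exactly by that atom. The only rule reading `S₀` is (1),
which on `S₀(w, w)` yields the atom `S(w, w)` already present; so `S₀(w, w)` stays inert at
every later step and `Step_n(Crit) = Step_n({End(w)}) ∪ {S₀(w, w)}` holds literally.
-/

def IsChaseClosed (Rset : Finset Rule) (J : Set Atom) : Prop :=
  ∀ t : Trigger, t.rule ∈ Rset → t.isOn J → (t.out : Set Atom) ⊆ J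

def chaseClosure (Rset : Finset Rule) (I : Set Atom) : Set Atom :=
  ⋂₀ {J | I ⊆ J ∧ IsChaseClosed Rset J}

section ChaseClosure

variable {Rset : Finset Rule} {I J : Set Atom}

lemma subset_chaseClosure : I ⊆ chaseClosure Rset I :=
  fun _ ha _ hJ => hJ.1 ha

lemma chaseClosure_subset (hIJ : I ⊆ J) (hJ : IsChaseClosed Rset J) :
    chaseClosure Rset I ⊆ J :=
  fun _ ha => ha J ⟨hIJ, hJ⟩

lemma Trigger.isOn_mono {t : Trigger} (h : I ⊆ J) (hI : t.isOn I) : t.isOn J :=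
  fun a ha => h (hI a ha)

lemma isChaseClosed_chaseClosure : IsChaseClosed Rset (chaseClosure Rset I) :=
  fun t ht hOn _ hb J hJ =>
    hJ.2 t ht (Trigger.isOn_mono (fun _ hx => Set.mem_sInter.mp hx J hJ) hOn) hb

lemma chaseClosure_mono (h : I ⊆ J) : chaseClosure Rset I ⊆ chaseClosure Rset J :=
  chaseClosure_subset (h.trans subset_chaseClosure) isChaseClosed_chaseClosure

end ChaseClosure

lemma applyA_congr {σ σ' : Subst} {a : Atom} (h : ∀ v ∈ atomVarsF a, σ v = σ' v) :
    applyA σ a = applyA σ' a := by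
  refine Prod.ext rfl (List.map_congr_left fun x hx => ?_)
  rcases x with _ | v
  · rfl
  · exact h v (List.mem_toFinset.mpr (List.mem_filterMap.mpr ⟨_, hx, rfl⟩))

lemma applyA_inr (a : Atom) : applyA Sum.inr a = a := by
  have h : applyT Sum.inr = id := funext fun x => by cases x <;> rfl
  simp [applyA, h]

lemma atomVarsF_subset_varsF {A : Finset Atom} {a : Atom} (ha : a ∈ A) :
    atomVarsF a ⊆ varsF A :=
  fun _ hv => Finset.mem_biUnion.mpr ⟨a, ha, hv⟩

section TriggerCongr

variable {R : Rule} {σ σ' : Subst}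

lemma Trigger.out_congr (h : ∀ v ∈ varsF R.1, σ v = σ' v) :
    Trigger.out ⟨R, σ⟩ = Trigger.out ⟨R, σ'⟩ := by
  have hcode : Trigger.code ⟨R, σ⟩ = Trigger.code ⟨R, σ'⟩ := by
    simp only [Trigger.code]
    congr 2
    exact Finset.image_congr fun v hv => by simp only [h v hv]
  have hext : Trigger.extSub ⟨R, σ⟩ = Trigger.extSub ⟨R, σ'⟩ := by
    funext v
    simp only [Trigger.extSub, hcode]
    split_ifs with hv
    exacts [h v hv, rfl]
  simp only [Trigger.out, hext]

lemma Trigger.isOn_congr (h : ∀ v ∈ varsF R.1, σ v = σ' v) {J : Set Atom} :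
    Trigger.isOn ⟨R, σ⟩ J ↔ Trigger.isOn ⟨R, σ'⟩ J := by
  have hA : ∀ a ∈ R.1, applyA σ a = applyA σ' a := fun a ha =>
    applyA_congr fun v hv => h v (atomVarsF_subset_varsF ha hv)
  exact forall₂_congr fun a ha => by rw [hA a ha]

lemma Trigger.out_of_datalog (h : varsF R.2 ⊆ varsF R.1) :
    Trigger.out ⟨R, σ⟩ = R.2.image (applyA σ) :=
  Finset.image_congr fun _ hb => applyA_congr fun _ hv =>
    if_pos (h (atomVarsF_subset_varsF hb hv))

end TriggerCongr

def Trigger.IsActive (Rset : Finset Rule) (J : Set Atom) (t : Trigger) : Prop :=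
  t.rule ∈ Rset ∧ t.isOn J ∧ ¬ ((t.out : Set Atom) ⊆ J)

/-- A trigger is determined, up to its output and the instances it is on, by its rule and the
values of its substitution on the body variables; there are countably many such data. -/
abbrev BodyMatch : Type := Σ R : Rule, (varsF R.1 → FTerm)

def triggerEnum (n : ℕ) : Trigger :=
  let x := (exists_surjective_nat BodyMatch).choose n
  ⟨x.1, fun v => if h : v ∈ varsF x.1.1 then x.2 ⟨v, h⟩ else wC⟩

lemma exists_triggerEnum_agree (t : Trigger) :
    ∃ n, (triggerEnum n).rule = t.rule ∧
      ∀ v ∈ varsF t.rule.1, (triggerEnum n).sub v = t.sub v := by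
  obtain ⟨n, hn⟩ := (exists_surjective_nat BodyMatch).choose_spec ⟨t.rule, fun v => t.sub v⟩
  refine ⟨n, ?_⟩
  simp only [triggerEnum]
  rw [hn]
  exact ⟨rfl, fun v hv => dif_pos hv⟩

def nextTrigger (Rset : Finset Rule) (J : Set Atom) : Option Trigger :=
  if h : ∃ n, (triggerEnum n).IsActive Rset J then some (triggerEnum (Nat.find h)) else none

section NextTrigger

variable {Rset : Finset Rule} {J : Set Atom}

lemma isActive_of_nextTrigger_eq_some {t : Trigger} (h : nextTrigger Rset J = some t) :
    t.IsActive Rset J := by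
  unfold nextTrigger at h
  split_ifs at h with hex
  exact Option.some_injective _ h ▸ Nat.find_spec hex

lemma exists_nextTrigger_eq_of_isActive {m : ℕ} (hm : (triggerEnum m).IsActive Rset J) :
    ∃ k ≤ m, (triggerEnum k).IsActive Rset J ∧ nextTrigger Rset J = some (triggerEnum k) :=
  have hex : ∃ n, (triggerEnum n).IsActive Rset J := ⟨m, hm⟩
  ⟨_, Nat.find_min' hex hm, Nat.find_spec hex, dif_pos hex⟩

end NextTrigger

def obliviousSeq (Rset : Finset Rule) (I : Set Atom) : ℕ → Set Atom
  | 0 => I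
  | n + 1 => obliviousSeq Rset I n ∪
      (match nextTrigger Rset (obliviousSeq Rset I n) with
        | none => (∅ : Set Atom)
        | some t => (t.out : Set Atom))

lemma instSeq_nextTrigger (Rset : Finset Rule) (I : Set Atom) (n : ℕ) :
    instSeq I (fun k => nextTrigger Rset (obliviousSeq Rset I k)) n = obliviousSeq Rset I n := by
  induction n with
  | zero => rfl
  | succ n ih => simp only [instSeq, obliviousSeq, ih]

def obliviousDeriv (Rset : Finset Rule) (I : Set Atom) : Deriv Rset I where
  steps n := nextTrigger Rset (obliviousSeq Rset I n)
  prefix_closed n hn := by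
    have hsucc : obliviousSeq Rset I (n + 1) = obliviousSeq Rset I n := by
      simp only [obliviousSeq, hn, Set.union_empty]
    simpa only [hsucc] using hn
  valid n t ht := by
    rw [instSeq_nextTrigger]
    exact isActive_of_nextTrigger_eq_some ht

section Deriv

variable {Rset : Finset Rule} {I : Set Atom}

lemma Deriv.inst_mono (D : Deriv Rset I) : Monotone D.inst :=
  monotone_nat_of_le_succ fun _ => Set.subset_union_left

lemma Deriv.out_subset_inst_succ (D : Deriv Rset I) {n : ℕ} {t : Trigger}
    (ht : D.steps n = some t) : (t.out : Set Atom) ⊆ D.inst (n + 1) := by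
  simp only [Deriv.inst, instSeq, ht]
  exact Set.subset_union_right

lemma obliviousDeriv_steps (n : ℕ) :
    (obliviousDeriv Rset I).steps n = nextTrigger Rset ((obliviousDeriv Rset I).inst n) :=
  (congrArg (nextTrigger Rset) (instSeq_nextTrigger Rset I n)).symm

lemma obliviousDeriv_isX : (obliviousDeriv Rset I).IsX .O := fun n _ ht =>
  (isActive_of_nextTrigger_eq_some (by rwa [obliviousDeriv_steps] at ht)).2.2

/-- If a trigger stayed active from stage `i` on, the indices of the triggers applied at the
later stages would be pairwise distinct (an applied trigger is never active again) and bounded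
by the index of that trigger. -/
lemma obliviousDeriv_fair : (obliviousDeriv Rset I).Fair .O := by
  set D := obliviousDeriv Rset I
  intro i t htr hOn happ
  by_contra! hlater
  obtain ⟨m, hrule, hsub⟩ := exists_triggerEnum_agree t
  have hactive : ∀ j, i ≤ j → (triggerEnum m).IsActive Rset (D.inst j) := by
    intro j hij
    have happj : Applicable .O t (D.inst j) := by
      rcases hij.lt_or_eq with hlt | rfl
      exacts [hlater j hlt, happ]
    have heq : triggerEnum m = ⟨t.rule, (triggerEnum m).sub⟩ := by rw [← hrule]
    rw [heq, Trigger.IsActive, Trigger.out_congr hsub, Trigger.isOn_congr hsub]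
    exact ⟨htr, Trigger.isOn_mono (D.inst_mono hij) hOn, happj⟩
  have hpick : ∀ j, ∃ k, i ≤ j → k ≤ m ∧ (triggerEnum k).IsActive Rset (D.inst j) ∧
      D.steps j = some (triggerEnum k) := fun j => by
    by_cases hij : i ≤ j
    · obtain ⟨k, hkm, hk, hnext⟩ := exists_nextTrigger_eq_of_isActive (hactive j hij)
      exact ⟨k, fun _ => ⟨hkm, hk, (obliviousDeriv_steps j).trans hnext⟩⟩
    · exact ⟨0, fun h => absurd h hij⟩
  choose c hc using hpick
  have hne : ∀ j j', i ≤ j → j < j' → c j ≠ c j' := by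
    intro j j' hij hjj' heq
    have hout := D.out_subset_inst_succ (hc j hij).2.2
    refine (hc j' (hij.trans hjj'.le)).2.1.2.2 ?_
    rw [← heq]
    exact hout.trans (D.inst_mono hjj')
  have hinj : Set.InjOn c (Set.Ici i) := by
    intro j hj j' hj' heq
    rcases lt_trichotomy j j' with h | h | h
    exacts [absurd heq (hne j j' hj h), h, absurd heq.symm (hne j' j hj' h)]
  exact Set.infinite_of_injOn_mapsTo hinj (fun j hj => (hc j hj).1) (Set.Ici_infinite i)
    (Set.finite_Iic m)

lemma exists_fair_obliviousDeriv : ∃ D : Deriv Rset I, D.IsX .O ∧ D.Fair .O :=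
  ⟨obliviousDeriv Rset I, obliviousDeriv_isX, obliviousDeriv_fair⟩

lemma Deriv.res_eq_chaseClosure (D : Deriv Rset I) (hF : D.Fair .O) :
    D.res = chaseClosure Rset I := by
  apply subset_antisymm
  · refine Set.iUnion_subset fun n => ?_
    induction n with
    | zero => exact subset_chaseClosure
    | succ n ih =>
      refine Set.union_subset ih ?_
      cases hn : D.steps n with
      | none => exact Set.empty_subset _
      | some t =>
        obtain ⟨htr, hOn, -⟩ := D.valid n t hn
        exact isChaseClosed_chaseClosure t htr (Trigger.isOn_mono ih hOn)
  · refine chaseClosure_subset (Set.subset_iUnion D.inst 0) fun t htr hOn => ?_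
    have hbody : (↑(t.rule.1.image (applyA t.sub)) : Set Atom) ⊆ ⋃ n, D.inst n := by
      rw [Finset.coe_image]
      exact Set.image_subset_iff.mpr hOn
    obtain ⟨n, hn⟩ := D.inst_mono.directed_le.exists_mem_subset_of_finset_subset_biUnion hbody
    have hOnn : t.isOn (D.inst n) := fun a ha =>
      hn (Finset.mem_coe.mpr (Finset.mem_image_of_mem _ ha))
    by_cases hout : (t.out : Set Atom) ⊆ D.inst n
    · exact hout.trans (Set.subset_iUnion D.inst n)
    · obtain ⟨j, -, hj⟩ := hF n t htr hOnn hout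
      exact (not_not.mp hj).trans (Set.subset_iUnion D.inst j)

end Deriv

lemma chX_O_eq_chaseClosure (Rset : Finset Rule) (I : Set Atom) :
    ChX .O Rset I = chaseClosure Rset I := by
  rw [ChX, dif_pos exists_fair_obliviousDeriv]
  exact Deriv.res_eq_chaseClosure _ exists_fair_obliviousDeriv.choose_spec.2

lemma fst_eq_pS_of_mem_spath {x y b n : ℕ} {a : Atom} (h : a ∈ spath x y b n) : a.1 = pS := by
  obtain ⟨j, -, rfl⟩ := Finset.mem_image.mp h
  rfl

lemma eq_ruleS_of_pS0_mem_body {M : TCM} {R : Rule} (hR : R ∈ RM M) {l : List FTerm}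
    (hl : (pS0, l) ∈ R.1) : R = ruleS := by
  have hspath : ∀ {x y b n}, (pS0, l) ∉ spath x y b n := fun h => by
    simpa [pS0, pS] using fst_eq_pS_of_mem_spath h
  simp only [RM, Finset.mem_union, Finset.mem_insert, Finset.mem_singleton,
    Finset.mem_biUnion, Finset.mem_range] at hR
  rcases hR with (rfl | rfl | rfl | rfl | rfl | rfl) | ⟨i, -, rfl | rfl | rfl⟩
  · rfl
  all_goals
    simp only [ruleFloodProp, ruleSEnd, ruleGInit, ruleFloodGen, ruleEx, ruleR, ruleT, ruleGStep,
      Finset.mem_union, hspath, or_false] at hl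
  all_goals simp [pS0, pFlood, pEnd, pS, pG, pR, pT] at hl <;> omega

lemma IsChaseClosed.union_pS0 {M : TCM} {Rset : Finset Rule} (hsub : Rset ⊆ RM M)
    {C : Set Atom} (hC : IsChaseClosed Rset C) (hS : ((pS, [wC, wC]) : Atom) ∈ C) :
    IsChaseClosed Rset (C ∪ {(pS0, [wC, wC])}) := by
  rintro ⟨R, σ⟩ hR hOn
  by_cases hall : Trigger.isOn ⟨R, σ⟩ C
  · exact (hC _ hR hall).trans Set.subset_union_left
  obtain ⟨⟨P, l⟩, ha, haC⟩ : ∃ a ∈ R.1, applyA σ a ∉ C := by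
    simpa [Trigger.isOn, IsHomOn] using hall
  have happ : applyA σ (P, l) = (pS0, [wC, wC]) := (hOn _ ha).resolve_left haC
  obtain rfl : P = pS0 := congrArg Prod.fst happ
  obtain rfl := eq_ruleS_of_pS0_mem_body (hsub hR) ha
  obtain rfl : l = [vt 0, vt 1] := by simpa [ruleS] using ha
  have hσ : σ (Sum.inl 0) = wC ∧ σ (Sum.inl 1) = wC := by
    simpa [applyA, applyT, vt] using happ
  rw [Trigger.out_of_datalog (by decide)]
  simp [ruleS, applyA, applyT, vt, hσ.1, hσ.2, hS]

lemma chaseClosure_union_pS0 {M : TCM} {Rset : Finset Rule} (hsub : Rset ⊆ RM M)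
    {A : Set Atom} (hS : ((pS, [wC, wC]) : Atom) ∈ A) :
    chaseClosure Rset (A ∪ {(pS0, [wC, wC])}) = chaseClosure Rset A ∪ {(pS0, [wC, wC])} :=
  subset_antisymm
    (chaseClosure_subset (Set.union_subset_union_left _ subset_chaseClosure)
      (isChaseClosed_chaseClosure.union_pS0 hsub (subset_chaseClosure hS)))
    (Set.union_subset (chaseClosure_mono Set.subset_union_left)
      (Set.subset_union_right.trans subset_chaseClosure))

lemma IsChaseClosed.applyA_mem_of_mem_datRules {Rs : Finset Rule} {C : Set Atom}
    (hC : IsChaseClosed (DatRules Rs) C) {R : Rule} (hR : R ∈ DatRules Rs) {σ : Subst}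
    (hbody : Trigger.isOn ⟨R, σ⟩ C) {b : Atom} (hb : b ∈ R.2) : applyA σ b ∈ C := by
  have hout := hC ⟨R, σ⟩ hR hbody
  rw [Trigger.out_of_datalog (Finset.mem_filter.mp hR).2] at hout
  exact hout (Finset.mem_coe.mpr (Finset.mem_image_of_mem _ hb))

lemma ruleFloodGen_mem_datRules (M : TCM) : ruleFloodGen M ∈ DatRules (RM M) := by
  refine Finset.mem_filter.mpr ⟨by simp [RM], ?_⟩
  have hbody : varsF (ruleFloodGen M).1 = {Sum.inl 0, Sum.inl 1, Sum.inl 2} := rfl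
  rw [hbody, varsF, Finset.biUnion_subset]
  intro a ha
  simp only [ruleFloodGen, Finset.mem_union, Finset.mem_singleton, Finset.mem_biUnion,
    Finset.mem_insert, Finset.mem_range] at ha
  rcases ha with rfl | ⟨j, -, rfl | rfl⟩ <;> simp [atomVarsF, vt, Finset.subset_iff]

lemma pS_mem_chaseClosure_IE (M : TCM) :
    ((pS, [wC, wC]) : Atom) ∈ chaseClosure (DatRules (RM M)) IE :=
  isChaseClosed_chaseClosure.applyA_mem_of_mem_datRules (σ := fun _ => wC) (R := ruleSEnd)
    (Finset.mem_filter.mpr ⟨by simp [RM], by decide⟩)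
    (by simpa [ruleSEnd, Trigger.isOn, IsHomOn, applyA, applyT, vt] using
      subset_chaseClosure (show ((pEnd, [wC]) : Atom) ∈ IE from rfl))
    (Finset.mem_singleton_self _)

lemma crit_subset_chaseClosure_IE (M : TCM) :
    Crit M ⊆ chaseClosure (DatRules (RM M)) IE ∪ {(pS0, [wC, wC])} := by
  set C := chaseClosure (DatRules (RM M)) IE
  have hC : IsChaseClosed (DatRules (RM M)) C := isChaseClosed_chaseClosure
  have hEnd : ((pEnd, [wC]) : Atom) ∈ C := subset_chaseClosure rfl
  have hS : ((pS, [wC, wC]) : Atom) ∈ C := pS_mem_chaseClosure_IE M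
  have hFlood : ((pFlood, [wC]) : Atom) ∈ C :=
    hC.applyA_mem_of_mem_datRules (σ := fun _ => wC) (R := ruleFloodProp)
      (Finset.mem_filter.mpr ⟨by simp [RM], by decide⟩) (by simpa [ruleFloodProp,
        Trigger.isOn, IsHomOn, applyA, applyT, vt] using hS) (Finset.mem_singleton_self _)
  have hFloodGen : ∀ b ∈ (ruleFloodGen M).2, applyA (fun _ => wC) b ∈ C :=
    fun _ => hC.applyA_mem_of_mem_datRules (ruleFloodGen_mem_datRules M)
      (by simp [ruleFloodGen, Trigger.isOn, IsHomOn, applyA, applyT, vt, hFlood])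
  rintro ⟨P, l⟩ ⟨hsig, hw⟩
  have hl : l = List.replicate l.length wC := List.eq_replicate_iff.mpr ⟨rfl, hw⟩
  rcases hsig with ⟨rfl | rfl, hlen⟩ | ⟨rfl | rfl | rfl | ⟨j, hj, rfl⟩, hlen⟩ |
    ⟨⟨j, hj, rfl⟩, hlen⟩ <;> rw [hl, hlen]
  · exact Or.inl hEnd
  · exact Or.inl hFlood
  · exact Or.inr rfl
  · exact Or.inl hS
  · exact Or.inl (hFloodGen (pG, [vt 0, vt 1]) (by simp [ruleFloodGen]))
  · exact Or.inl (hFloodGen (pR j, [vt 0, vt 1]) (Finset.mem_union_right _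
      (Finset.mem_biUnion.mpr ⟨j, Finset.mem_range.mpr hj, by simp⟩)))
  · exact Or.inl (hFloodGen (pT j, [vt 0, vt 1, vt 2]) (Finset.mem_union_right _
      (Finset.mem_biUnion.mpr ⟨j, Finset.mem_range.mpr hj, by simp⟩)))

lemma datRules_subset (Rs : Finset Rule) : DatRules Rs ⊆ Rs := Finset.filter_subset _ _

lemma nDatRules_subset (Rs : Finset Rule) : NDatRules Rs ⊆ Rs := Finset.filter_subset _ _

lemma stepX_O_zero (M : TCM) (I : Set Atom) :
    StepX .O M 0 I = chaseClosure (DatRules (RM M)) I :=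
  chX_O_eq_chaseClosure _ _

lemma stepX_O_succ (M : TCM) (n : ℕ) (I : Set Atom) :
    StepX .O M (n + 1) I =
      chaseClosure (DatRules (RM M)) (chaseClosure (NDatRules (RM M)) (StepX .O M n I)) := by
  rw [StepX, chX_O_eq_chaseClosure, chX_O_eq_chaseClosure]

lemma pS_mem_stepX_IE (M : TCM) (n : ℕ) : ((pS, [wC, wC]) : Atom) ∈ StepX .O M n IE := by
  induction n with
  | zero => rw [stepX_O_zero]; exact pS_mem_chaseClosure_IE M
  | succ n ih => rw [stepX_O_succ]; exact subset_chaseClosure (subset_chaseClosure ih)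

lemma chaseClosure_crit (M : TCM) :
    chaseClosure (DatRules (RM M)) (Crit M) =
      chaseClosure (DatRules (RM M)) IE ∪ {(pS0, [wC, wC])} := by
  have hIE : IE ⊆ Crit M := Set.singleton_subset_iff.mpr ⟨Or.inl ⟨Or.inl rfl, rfl⟩, by simp⟩
  have hS0 : ((pS0, [wC, wC]) : Atom) ∈ Crit M := ⟨Or.inr (Or.inl ⟨Or.inl rfl, rfl⟩), by simp⟩
  exact subset_antisymm
    (chaseClosure_subset (crit_subset_chaseClosure_IE M)
      (isChaseClosed_chaseClosure.union_pS0 (datRules_subset _) (pS_mem_chaseClosure_IE M)))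
    (Set.union_subset (chaseClosure_mono hIE)
      (Set.singleton_subset_iff.mpr (subset_chaseClosure hS0)))

lemma stepX_crit (M : TCM) (n : ℕ) :
    StepX .O M n (Crit M) = StepX .O M n IE ∪ {(pS0, [wC, wC])} := by
  induction n with
  | zero => rw [stepX_O_zero, stepX_O_zero, chaseClosure_crit]
  | succ n ih =>
    have hS := pS_mem_stepX_IE M n
    rw [stepX_O_succ, stepX_O_succ, ih, chaseClosure_union_pS0 (nDatRules_subset _) hS,
      chaseClosure_union_pS0 (datRules_subset _) (subset_chaseClosure hS)]

lemma isomorphic_refl (A : Set Atom) : Isomorphic A A :=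
  ⟨Sum.inr, Sum.inr, by simp [IsHomOn, applyA_inr], by simp [IsHomOn, applyA_inr],
    by simp [applyA_inr], by simp [applyA_inr]⟩

/-- `Crit_n` is isomorphic to `Step^O_n({End(w)}) ∪ {S₀(w,w)}`. -/
theorem stmt_5 (M : TCM) (n : ℕ) :
    Isomorphic (StepX ChaseVariant.O M n (Crit M))
      (StepX ChaseVariant.O M n IE ∪ {(pS0, [wC, wC])}) := by
  rw [stepX_crit]
  exact isomorphic_refl _

end
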